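/- arXiv:2007.08171 — 3 statements merged into one kernel-verified Lean document; each statement's English description precedes it below -/
import Mathlib

section
/- For every r ∈ (0,1), the integral g(r) = ∫_1^∞ exp(-(r/2)(s + 1/s)) ds/s satisfies g(r) = -log r + O(1); more precisely, |g(r) + log r| ≤ 1/2 + 2·exp(-1/2) for all r ∈ (0,1). -/
open MeasureTheory

noncomputable def g (r : ℝ) : ℝ :=
  ∫ s in Set.Ioi (1 : ℝ), Real.exp (-(r / 2) * (s + 1 / s)) / s

/-!
Split the integral at `s = 1/r`. On `[1, 1/r]` the exponential factor differs from `1` by at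
most `(r/2)(s + 1/s)`, so that piece is `∫₁^{1/r} ds/s = -log r` up to
`(r/2) ∫₁^{1/r} (1 + 1/s²) ds = (1 - r²)/2 ≤ 1/2`. Beyond `1/r` we have `1/s ≤ r`, so the tail
is nonnegative and at most `∫_{1/r}^∞ r e^{-rs/2} ds = 2 e^{-1/2}`.
-/

open Set Real

noncomputable def gIntegrand (r s : ℝ) : ℝ := exp (-(r / 2) * (s + 1 / s)) / s

theorem g_eq_integral_gIntegrand (r : ℝ) : g r = ∫ s in Ioi 1, gIntegrand r s := rfl

section gIntegrand

variable {r s : ℝ}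

theorem gIntegrand_nonneg (hs : 0 < s) : 0 ≤ gIntegrand r s := by
  unfold gIntegrand
  positivity

theorem gIntegrand_le (hr : 0 ≤ r) (hs : 0 < s) : gIntegrand r s ≤ exp (-(r / 2) * s) / s := by
  refine div_le_div_of_nonneg_right (exp_le_exp.2 ?_) hs.le
  have : 0 ≤ r / 2 * (1 / s) := by positivity
  linarith [mul_add (-(r / 2)) s (1 / s)]

theorem abs_gIntegrand_sub_one_div_le (hr : 0 ≤ r) (hs : 0 < s) :
    |gIntegrand r s - 1 / s| ≤ r / 2 * (1 + 1 / s ^ 2) := by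
  set x := r / 2 * (s + 1 / s)
  have hx : 0 ≤ x := by positivity
  have hdiff : gIntegrand r s - 1 / s = -((1 - exp (-x)) / s) := by
    unfold gIntegrand x
    ring_nf
  have hexp_le : exp (-x) ≤ 1 := exp_le_one_iff.2 (neg_nonpos.2 hx)
  rw [hdiff, abs_neg, abs_of_nonneg (div_nonneg (sub_nonneg.2 hexp_le) hs.le)]
  calc (1 - exp (-x)) / s ≤ x / s := by gcongr; linarith [one_sub_le_exp_neg x]
    _ = r / 2 * (1 + 1 / s ^ 2) := by unfold x; field_simp

theorem measurable_gIntegrand : Measurable (gIntegrand r) := by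
  unfold gIntegrand
  fun_prop

theorem integrableOn_gIntegrand_Ioi {a : ℝ} (hr : 0 < r) (ha : 0 < a) :
    IntegrableOn (gIntegrand r) (Ioi a) := by
  refine Integrable.mono' ((integrableOn_exp_mul_Ioi (by linarith : -(r / 2) < 0) a).div_const a)
    measurable_gIntegrand.aestronglyMeasurable ?_
  rw [ae_restrict_iff' measurableSet_Ioi]
  refine Filter.Eventually.of_forall fun s (hs : a < s) => ?_
  have hs0 : 0 < s := ha.trans hs
  rw [norm_of_nonneg (gIntegrand_nonneg hs0)]
  exact (gIntegrand_le hr.le hs0).trans (by gcongr)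

end gIntegrand

theorem pos_of_mem_uIcc {a b x : ℝ} (ha : 0 < a) (hb : 0 < b) (hx : x ∈ uIcc a b) : 0 < x :=
  (lt_min ha hb).trans_le hx.1

theorem intervalIntegrable_one_add_one_div_sq {a b : ℝ} (ha : 0 < a) (hb : 0 < b) :
    IntervalIntegrable (fun x => 1 + 1 / x ^ 2) volume a b :=
  (continuousOn_const.add (continuousOn_const.div (continuousOn_id.pow 2)
    fun _ hx => pow_ne_zero 2 (pos_of_mem_uIcc ha hb hx).ne')).intervalIntegrable

theorem integral_one_add_one_div_sq {a b : ℝ} (ha : 0 < a) (hb : 0 < b) :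
    ∫ x in a..b, (1 + 1 / x ^ 2) = (b - 1 / b) - (a - 1 / a) := by
  refine intervalIntegral.integral_eq_sub_of_hasDerivAt (f := fun x => x - 1 / x)
    (fun x hx => ?_) (intervalIntegrable_one_add_one_div_sq ha hb)
  have := (hasDerivAt_id' x).fun_sub (hasDerivAt_inv (pos_of_mem_uIcc ha hb hx).ne')
  convert this using 1 <;> simp [one_div]

theorem abs_integral_gIntegrand_sub_one_div_le {r L : ℝ} (hr : 0 ≤ r) (hL : 1 ≤ L) :
    |∫ s in 1..L, (gIntegrand r s - 1 / s)| ≤ r / 2 * (L - 1 / L) := by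
  have hL0 : 0 < L := one_pos.trans_le hL
  calc |∫ s in 1..L, (gIntegrand r s - 1 / s)| ≤ ∫ s in 1..L, r / 2 * (1 + 1 / s ^ 2) := by
        rw [← Real.norm_eq_abs]
        exact intervalIntegral.norm_integral_le_of_norm_le hL
          (Filter.Eventually.of_forall fun s hs =>
            abs_gIntegrand_sub_one_div_le hr (one_pos.trans hs.1))
          ((intervalIntegrable_one_add_one_div_sq one_pos hL0).const_mul _)
    _ = r / 2 * (L - 1 / L) := by
        rw [intervalIntegral.integral_const_mul, integral_one_add_one_div_sq one_pos hL0]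
        ring

theorem integral_gIntegrand_Ioi_inv_le {r : ℝ} (hr : 0 < r) :
    ∫ s in Ioi r⁻¹, gIntegrand r s ≤ 2 * exp (-(1 / 2)) := by
  have hdecay : -(r / 2) < 0 := by linarith
  calc ∫ s in Ioi r⁻¹, gIntegrand r s ≤ ∫ s in Ioi r⁻¹, r * exp (-(r / 2) * s) := by
        refine setIntegral_mono_on (integrableOn_gIntegrand_Ioi hr (inv_pos.2 hr))
          ((integrableOn_exp_mul_Ioi hdecay _).const_mul r) measurableSet_Ioi fun s hs => ?_
        have hs0 : 0 < s := (inv_pos.2 hr).trans hs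
        have hinv : s⁻¹ ≤ r := inv_le_of_inv_le₀ hr hs.le
        calc gIntegrand r s ≤ exp (-(r / 2) * s) / s := gIntegrand_le hr.le hs0
          _ = s⁻¹ * exp (-(r / 2) * s) := by ring
          _ ≤ r * exp (-(r / 2) * s) := by gcongr
    _ = 2 * exp (-(1 / 2)) := by
        have hexponent : -(r / 2) * r⁻¹ = -(1 / 2) := by field_simp
        rw [integral_const_mul, integral_exp_mul_Ioi hdecay, hexponent]
        field_simp

theorem g_eq_intervalIntegral_add_log_add_integral_Ioi {r L : ℝ} (hr : 0 < r) (hL : 1 ≤ L) :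
    g r = (∫ s in 1..L, (gIntegrand r s - 1 / s)) + log L + ∫ s in Ioi L, gIntegrand r s := by
  have hL0 : 0 < L := one_pos.trans_le hL
  have hint := integrableOn_gIntegrand_Ioi hr one_pos
  have hint_head : IntervalIntegrable (gIntegrand r) volume 1 L :=
    (intervalIntegrable_iff_integrableOn_Ioc_of_le hL).2 (hint.mono_set Ioc_subset_Ioi_self)
  have hinv : IntervalIntegrable (fun s : ℝ => 1 / s) volume 1 L :=
    intervalIntegral.intervalIntegrable_one_div
      (fun x hx => (pos_of_mem_uIcc one_pos hL0 hx).ne') continuousOn_id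
  rw [g_eq_integral_gIntegrand, ← intervalIntegral.integral_interval_add_Ioi hint
      (integrableOn_gIntegrand_Ioi hr hL0), intervalIntegral.integral_sub hint_head hinv,
    integral_one_div_of_pos one_pos hL0, div_one]
  ring

theorem stmt_0 :
    ∀ r ∈ Set.Ioo (0 : ℝ) 1,
      |g r + Real.log r| ≤ 1 / 2 + 2 * Real.exp (-(1 / 2)) := by
  rintro r ⟨hr0, hr1⟩
  have hL : 1 ≤ r⁻¹ := (one_le_inv₀ hr0).2 hr1.le
  have hhead : |∫ s in 1..r⁻¹, (gIntegrand r s - 1 / s)| ≤ 1 / 2 := by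
    refine (abs_integral_gIntegrand_sub_one_div_le hr0.le hL).trans ?_
    have : r / 2 * (r⁻¹ - 1 / r⁻¹) = (1 - r ^ 2) / 2 := by field_simp
    nlinarith
  have htail_nonneg : 0 ≤ ∫ s in Ioi r⁻¹, gIntegrand r s :=
    setIntegral_nonneg measurableSet_Ioi fun s hs => gIntegrand_nonneg ((inv_pos.2 hr0).trans hs)
  rw [g_eq_intervalIntegral_add_log_add_integral_Ioi hr0 hL, log_inv, add_right_comm,
    neg_add_cancel_right]
  refine (abs_add_le _ _).trans ?_
  rw [abs_of_nonneg htail_nonneg]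
  linarith [integral_gIntegrand_Ioi_inv_le hr0]
end

section
/- Let ρ : ℝ² → ℝ be measurable with |ρ(x)| ≤ C(1 + |x|)^{-2-γ} for some constants C > 0 and γ > 0. Then sup over |x| > 1 of |∫_{ℝ²} |ρ(y)| · log(|x| / |x - y|) dy| is finite. -/
/-!
For `‖x‖ > 1` the ratio `‖x‖ / ‖x - y‖` lies between `1 / (1 + ‖y‖)` and
`(1 + ‖y‖) / min 1 ‖x - y‖`, so the kernel is bounded by `log (1 + ‖y‖) + log⁺ ‖x - y‖⁻¹`.
Against `|ρ|` the first term is integrable thanks to the extra decay `γ`, and the second is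
a translate of the locally integrable singularity `log⁺ ‖z‖⁻¹`, whose integral does not depend
on `x`.
-/

open MeasureTheory Real Metric

namespace Real

lemma abs_log_div_le_log_one_add_abs_sub_add_posLog_inv {s t : ℝ} (hs : 1 ≤ s) (ht : 0 ≤ t) :
    |log (s / t)| ≤ log (1 + |s - t|) + log⁺ t⁻¹ := by
  rcases ht.eq_or_lt with rfl | ht
  · simpa using log_nonneg (by linarith [abs_nonneg s] : (1 : ℝ) ≤ 1 + |s|)
  have hs0 : 0 < s := by linarith
  rw [log_div hs0.ne' ht.ne']
  rcases le_total t s with hts | hst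
  · rw [abs_of_nonneg (sub_nonneg.2 (log_le_log ht hts)), abs_of_nonneg (sub_nonneg.2 hts)]
    rcases le_total 1 t with ht1 | ht1
    · have : log s ≤ log (1 + (s - t)) + log t := by
        rw [← log_mul (by linarith) ht.ne']
        exact log_le_log hs0 (by nlinarith)
      linarith [posLog_nonneg (x := t⁻¹)]
    · have : log s ≤ log (1 + (s - t)) := log_le_log hs0 (by linarith)
      have : -log t ≤ log⁺ t⁻¹ := by rw [← log_inv]; exact le_max_right _ _
      linarith
  · rw [abs_of_nonpos (sub_nonpos.2 (log_le_log hs0 hst)), abs_of_nonpos (sub_nonpos.2 hst)]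
    have : log t ≤ log (1 + -(s - t)) + log s := by
      rw [← log_mul (by linarith) hs0.ne']
      exact log_le_log ht (by nlinarith)
    linarith [posLog_nonneg (x := t⁻¹), log_nonneg hs]

lemma posLog_inv_le_rpow_neg_div {x ε : ℝ} (hx : 0 ≤ x) (hε : 0 < ε) :
    log⁺ x⁻¹ ≤ x ^ (-ε) / ε := by
  rw [rpow_neg hx, ← inv_rpow hx]
  exact max_le (by positivity) (log_le_rpow_div (inv_nonneg.2 hx) hε)

lemma rpow_neg_mul_log_le {w r ε : ℝ} (hw : 1 ≤ w) (hε : 0 < ε) :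
    w ^ (-r) * log w ≤ w ^ (-(r - ε)) / ε := by
  have hw0 : 0 < w := by linarith
  calc w ^ (-r) * log w ≤ w ^ (-r) * (w ^ ε / ε) :=
        mul_le_mul_of_nonneg_left (log_le_rpow_div hw0.le hε) (by positivity)
    _ = w ^ (-(r - ε)) / ε := by
        rw [mul_div_assoc', ← rpow_add hw0]
        ring_nf

end Real

section NormedSpace

variable {E : Type*} [NormedAddCommGroup E]

lemma abs_log_norm_div_norm_sub_le {x : E} (hx : 1 ≤ ‖x‖) (y : E) :
    |log (‖x‖ / ‖x - y‖)| ≤ log (1 + ‖y‖) + log⁺ ‖x - y‖⁻¹ := by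
  refine (abs_log_div_le_log_one_add_abs_sub_add_posLog_inv hx (norm_nonneg _)).trans ?_
  gcongr
  simpa using abs_norm_sub_norm_le x (x - y)

variable [NormedSpace ℝ E] [FiniteDimensional ℝ E] [MeasurableSpace E] [BorelSpace E]
  {μ : Measure E} [μ.IsAddHaarMeasure]

lemma integrable_posLog_norm_inv (hd : 1 ≤ Module.finrank ℝ E) :
    Integrable (fun z : E ↦ log⁺ ‖z‖⁻¹) μ := by
  have hmeas : AEStronglyMeasurable (fun z : E ↦ log⁺ ‖z‖⁻¹) μ := by
    fun_prop
  have hball : IntegrableOn (fun z : E ↦ log⁺ ‖z‖⁻¹) (ball 0 1) μ := by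
    refine integrableOn_ball_of_norm_le_rpow hd (C := 2) (α := 2⁻¹)
      (by rw [← Nat.one_le_cast (α := ℝ)] at hd; linarith) (ae_of_all _ fun z ↦ ?_) hmeas
    rw [norm_of_nonneg posLog_nonneg, mul_comm, ← div_inv_eq_mul]
    exact posLog_inv_le_rpow_neg_div (norm_nonneg z) (by norm_num)
  refine hball.integrable_of_forall_notMem_eq_zero fun z hz ↦ ?_
  rw [posLog_eq_zero_iff, abs_inv, abs_norm]
  exact inv_le_one_of_one_le₀ (by simpa using hz)

end NormedSpace

theorem stmt_3_general (ρ : EuclideanSpace ℝ (Fin 2) → ℝ)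
    (C γ : ℝ) (hC : 0 < C) (hγ : 0 < γ)
    (hbound : ∀ x, |ρ x| ≤ C * (1 + ‖x‖) ^ (-(2 + γ))) :
    ∃ B : ℝ, ∀ x : EuclideanSpace ℝ (Fin 2), 1 < ‖x‖ →
      |∫ y, |ρ y| * Real.log (‖x‖ / ‖x - y‖)| ≤ B := by
  set decay : EuclideanSpace ℝ (Fin 2) → ℝ := fun y ↦ 2 * C / γ * (1 + ‖y‖) ^ (-(2 + γ / 2))
  set sing : EuclideanSpace ℝ (Fin 2) → ℝ := fun z ↦ log⁺ ‖z‖⁻¹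
  have hdecay : Integrable decay :=
    (integrable_one_add_norm (by simp; linarith)).const_mul _
  have hsing : Integrable sing := integrable_posLog_norm_inv (by simp)
  refine ⟨(∫ y, decay y) + C * ∫ z, sing z, fun x hx ↦ ?_⟩
  have hρ_le (y) : |ρ y| ≤ C :=
    (hbound y).trans (mul_le_of_le_one_right hC.le
      (rpow_le_one_of_one_le_of_nonpos (by simp) (by linarith)))
  have hρ_log_le (y) : |ρ y| * log (1 + ‖y‖) ≤ decay y :=
    calc |ρ y| * log (1 + ‖y‖) ≤ C * ((1 + ‖y‖) ^ (-(2 + γ)) * log (1 + ‖y‖)) := by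
          rw [← mul_assoc]
          exact mul_le_mul_of_nonneg_right (hbound y) (log_nonneg (by simp))
      _ ≤ C * ((1 + ‖y‖) ^ (-(2 + γ - γ / 2)) / (γ / 2)) := by
          gcongr
          exact rpow_neg_mul_log_le (by simp) (by positivity)
      _ = decay y := by
          simp only [decay]
          ring_nf
  have hintegrand (y) : ‖|ρ y| * log (‖x‖ / ‖x - y‖)‖ ≤ decay y + C * sing (x - y) :=
    calc ‖|ρ y| * log (‖x‖ / ‖x - y‖)‖ = |ρ y| * |log (‖x‖ / ‖x - y‖)| := by
          rw [norm_mul, norm_eq_abs, norm_eq_abs, abs_abs]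
      _ ≤ |ρ y| * (log (1 + ‖y‖) + sing (x - y)) :=
          mul_le_mul_of_nonneg_left (abs_log_norm_div_norm_sub_le hx.le y) (abs_nonneg _)
      _ ≤ decay y + C * sing (x - y) := by
          rw [mul_add]
          gcongr
          · exact hρ_log_le y
          · exact posLog_nonneg
          · exact hρ_le y
  calc |∫ y, |ρ y| * log (‖x‖ / ‖x - y‖)|
      ≤ ∫ y, (decay y + C * sing (x - y)) :=
        norm_integral_le_of_norm_le (hdecay.add ((hsing.comp_sub_left x).const_mul C))
          (ae_of_all _ hintegrand)
    _ = (∫ y, decay y) + C * ∫ z, sing z := by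
        rw [integral_add hdecay ((hsing.comp_sub_left x).const_mul C), integral_const_mul C fun y ↦ sing (x - y),
          integral_sub_left_eq_self]

theorem stmt_3 (ρ : EuclideanSpace ℝ (Fin 2) → ℝ) (hρ : Measurable ρ)
    (C γ : ℝ) (hC : 0 < C) (hγ : 0 < γ)
    (hbound : ∀ x, |ρ x| ≤ C * (1 + ‖x‖) ^ (-(2 + γ))) :
    ∃ B : ℝ, ∀ x : EuclideanSpace ℝ (Fin 2), 1 < ‖x‖ →
      |∫ y, |ρ y| * Real.log (‖x‖ / ‖x - y‖)| ≤ B :=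
  stmt_3_general ρ C γ hC hγ hbound
end

section
/- Let ρ : ℝ² → ℝ satisfy ∫_{ℝ²} ρ(x) dx = 1 and |ρ(x)| ≤ C(1 + |x|)^{-4-2γ} for some C, γ > 0, and set ρ_N(x) = 2^{2N} ρ(2^N x) for N ∈ ℕ. Then there is a constant C' such that for all N ∈ ℕ and all x with |x| ≤ 2^{-N}, one has |∫_{ℝ²} ρ_N(y) log|x - y| dy - log 2^{-N}| ≤ C'. -/
/-!
Substituting `y = 2^{-N} z` turns the integral into `∫ ρ(z) log|x - 2^{-N} z| dz`, and
`log|x - 2^{-N} z| = log 2^{-N} + log|u - z|` with `u = 2^N x` in the unit ball, so since `∫ ρ = 1`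
it remains to bound `∫ ρ(z) log|u - z| dz` uniformly for `|u| ≤ 1`. That follows from
`|log t| ≤ t⁻¹ 𝟙_{t < 1} + t`: the first term is locally integrable in dimension at least two
and is paired with the bounded `ρ`, the second is absorbed by the decay of `ρ`.
-/

open MeasureTheory Metric Real Module

lemma abs_log_norm_le_indicator_inv_add_norm {E : Type*} [NormedAddCommGroup E] (w : E) :
    |log ‖w‖| ≤ (ball (0 : E) 1).indicator (fun w => ‖w‖⁻¹) w + ‖w‖ := by
  by_cases hw : w ∈ ball (0 : E) 1
  · rw [Set.indicator_of_mem hw]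
    rw [mem_ball_zero_iff] at hw
    have hlog : |log ‖w‖| ≤ ‖w‖⁻¹ := by
      rcases (norm_nonneg w).eq_or_lt with h0 | hpos
      · simp [← h0]
      · rw [abs_of_nonpos (log_nonpos hpos.le hw.le), ← log_inv]
        linarith [log_le_sub_one_of_pos (inv_pos.mpr hpos)]
    linarith [norm_nonneg w]
  · rw [Set.indicator_of_notMem hw, zero_add]
    rw [mem_ball_zero_iff, not_lt] at hw
    rw [abs_of_nonneg (log_nonneg hw)]
    linarith [log_le_sub_one_of_pos (one_pos.trans_le hw)]

lemma abs_mul_log_norm_sub_le {E : Type*} [NormedAddCommGroup E] {ρ : E → ℝ} {M : ℝ}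
    (hM : ∀ z, |ρ z| ≤ M) {u : E} (hu : ‖u‖ ≤ 1) (z : E) :
    |ρ z * log ‖u - z‖| ≤
      M * (ball (0 : E) 1).indicator (fun w => ‖w‖⁻¹) (z - u) + |(1 + ‖z‖) * ρ z| := by
  have hind : 0 ≤ (ball (0 : E) 1).indicator (fun w => ‖w‖⁻¹) (z - u) :=
    Set.indicator_nonneg (fun w _ => inv_nonneg.mpr (norm_nonneg w)) _
  have hnorm : ‖z - u‖ ≤ 1 + ‖z‖ := (norm_sub_le z u).trans (by linarith)
  calc |ρ z * log ‖u - z‖|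
      ≤ |ρ z| * ((ball (0 : E) 1).indicator (fun w => ‖w‖⁻¹) (z - u) + (1 + ‖z‖)) := by
        rw [abs_mul, norm_sub_rev]
        gcongr
        exact (abs_log_norm_le_indicator_inv_add_norm _).trans (by gcongr)
    _ ≤ M * (ball (0 : E) 1).indicator (fun w => ‖w‖⁻¹) (z - u) + |(1 + ‖z‖) * ρ z| := by
        rw [mul_add, abs_mul, abs_of_pos (by positivity : (0 : ℝ) < 1 + ‖z‖)]
        linarith [mul_le_mul_of_nonneg_right (hM z) hind]

section LogPotential

variable {E : Type*} [NormedAddCommGroup E] [NormedSpace ℝ E] [FiniteDimensional ℝ E]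
  [MeasurableSpace E] [BorelSpace E] {μ : Measure E} [μ.IsAddHaarMeasure]

lemma integrable_indicator_ball_norm_inv (hd : 1 < finrank ℝ E) :
    Integrable ((ball (0 : E) 1).indicator fun w => ‖w‖⁻¹) μ := by
  rw [integrable_indicator_iff measurableSet_ball]
  refine integrableOn_ball_of_norm_le_rpow (C := 1) (α := 1) hd.le (by exact_mod_cast hd)
    (Filter.Eventually.of_forall fun w => ?_) (by fun_prop)
  simp [rpow_neg_one]

lemma integrable_one_add_norm_mul_of_abs_le_rpow {ρ : E → ℝ} (hρ : AEStronglyMeasurable ρ μ)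
    {C r : ℝ} (hr : (finrank ℝ E : ℝ) + 1 < r)
    (hbound : ∀ z, |ρ z| ≤ C * (1 + ‖z‖) ^ (-r)) :
    Integrable (fun z => (1 + ‖z‖) * ρ z) μ := by
  refine ((integrable_one_add_norm (r := r - 1) (by linarith)).const_mul C).mono'
    (by fun_prop) (Filter.Eventually.of_forall fun z => ?_)
  have h1 : 0 < 1 + ‖z‖ := by positivity
  calc ‖(1 + ‖z‖) * ρ z‖ = (1 + ‖z‖) * |ρ z| := by
        rw [norm_mul, norm_of_nonneg h1.le, norm_eq_abs]
    _ ≤ (1 + ‖z‖) * (C * (1 + ‖z‖) ^ (-r)) := by gcongr; exact hbound z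
    _ = C * (1 + ‖z‖) ^ (-(r - 1)) := by
        rw [neg_sub, sub_eq_neg_add, rpow_add_one h1.ne']
        ring

lemma integrable_mul_log_norm_sub {ρ : E → ℝ} {M : ℝ} (hd : 1 < finrank ℝ E)
    (hρ : AEStronglyMeasurable ρ μ) (hM : ∀ z, |ρ z| ≤ M)
    (hmom : Integrable (fun z => (1 + ‖z‖) * ρ z) μ) {u : E} (hu : ‖u‖ ≤ 1) :
    Integrable (fun z => ρ z * log ‖u - z‖) μ :=
  (((integrable_indicator_ball_norm_inv hd).comp_sub_right u).const_mul M |>.add hmom.abs).mono'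
    (hρ.mul (measurable_log.comp (measurable_const.sub measurable_id).norm).aestronglyMeasurable)
    (Filter.Eventually.of_forall (abs_mul_log_norm_sub_le hM hu))

lemma abs_integral_mul_log_norm_sub_le {ρ : E → ℝ} {M : ℝ} (hd : 1 < finrank ℝ E)
    (hρ : AEStronglyMeasurable ρ μ) (hM : ∀ z, |ρ z| ≤ M)
    (hmom : Integrable (fun z => (1 + ‖z‖) * ρ z) μ) {u : E} (hu : ‖u‖ ≤ 1) :
    |∫ z, ρ z * log ‖u - z‖ ∂μ| ≤
      M * ∫ w, (ball (0 : E) 1).indicator (fun w => ‖w‖⁻¹) w ∂μ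
        + ∫ z, |(1 + ‖z‖) * ρ z| ∂μ := by
  have hind := (integrable_indicator_ball_norm_inv (μ := μ) hd).comp_sub_right u
  calc |∫ z, ρ z * log ‖u - z‖ ∂μ| ≤ ∫ z, |ρ z * log ‖u - z‖| ∂μ :=
        abs_integral_le_integral_abs
    _ ≤ ∫ z, (M * (ball (0 : E) 1).indicator (fun w => ‖w‖⁻¹) (z - u)
          + |(1 + ‖z‖) * ρ z|) ∂μ :=
        integral_mono (integrable_mul_log_norm_sub hd hρ hM hmom hu).abs
          ((hind.const_mul M).add hmom.abs) (abs_mul_log_norm_sub_le hM hu)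
    _ = _ := by
        rw [integral_add (hind.const_mul M) hmom.abs, integral_const_mul,
          integral_sub_right_eq_self]

lemma integral_pow_finrank_mul_comp_smul (f g : E → ℝ) {c : ℝ} (hc : 0 < c) :
    ∫ y, c ^ finrank ℝ E * f (c • y) * g y ∂μ = ∫ z, f z * g (c⁻¹ • z) ∂μ := by
  have h := Measure.integral_comp_inv_smul_of_nonneg μ (fun y => f (c • y) * g y) hc.le
  simp only [smul_inv_smul₀ hc.ne'] at h
  simp_rw [h, smul_eq_mul, ← integral_const_mul, mul_assoc]

lemma integral_mul_log_norm_sub_inv_smul [Nontrivial E] {ρ : E → ℝ} {c : ℝ} {x : E}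
    (hρ : Integrable ρ μ) (hlog : Integrable (fun z => ρ z * log ‖c • x - z‖) μ) (hc : 0 < c) :
    ∫ z, ρ z * log ‖x - c⁻¹ • z‖ ∂μ = ∫ z, ρ z * log ‖c • x - z‖ ∂μ - log c * ∫ z, ρ z ∂μ := by
  rw [← integral_const_mul, ← integral_sub hlog (hρ.const_mul _)]
  refine integral_congr_ae ?_
  filter_upwards [μ.ae_ne (c • x)] with z hz
  have hscale : x - c⁻¹ • z = c⁻¹ • (c • x - z) := by
    rw [smul_sub, inv_smul_smul₀ hc.ne']
  rw [hscale, norm_smul, norm_inv, norm_of_nonneg hc.le,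
    log_mul (inv_ne_zero hc.ne') (norm_ne_zero_iff.mpr (sub_ne_zero.mpr hz.symm)), log_inv]
  ring

end LogPotential

theorem stmt_4 (ρ : EuclideanSpace ℝ (Fin 2) → ℝ) (hρ : Measurable ρ)
    (hint : ∫ x, ρ x = 1)
    (C γ : ℝ) (hC : 0 < C) (hγ : 0 < γ)
    (hbound : ∀ x, |ρ x| ≤ C * (1 + ‖x‖) ^ (-(4 + 2 * γ))) :
    ∃ C' : ℝ, ∀ N : ℕ, ∀ x : EuclideanSpace ℝ (Fin 2), ‖x‖ ≤ (2 : ℝ) ^ (-(N : ℝ)) →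
      |(∫ y, (2 : ℝ) ^ (2 * N) * ρ ((2 : ℝ) ^ N • y) * Real.log ‖x - y‖)
        - Real.log ((2 : ℝ) ^ (-(N : ℝ)))| ≤ C' := by
  have hd : 1 < finrank ℝ (EuclideanSpace ℝ (Fin 2)) := by simp
  have hmom : Integrable fun z => (1 + ‖z‖) * ρ z :=
    integrable_one_add_norm_mul_of_abs_le_rpow hρ.aestronglyMeasurable
      (by simp; linarith) hbound
  have hρint : Integrable ρ := hmom.mono hρ.aestronglyMeasurable
    (Filter.Eventually.of_forall fun z => by
      rw [norm_mul, norm_of_nonneg (by positivity : (0 : ℝ) ≤ 1 + ‖z‖)]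
      exact le_mul_of_one_le_left (norm_nonneg _) (by simp))
  have hρC : ∀ z, |ρ z| ≤ C := fun z => (hbound z).trans <| mul_le_of_le_one_right hC.le <|
    rpow_le_one_of_one_le_of_nonpos (by simp) (by linarith)
  refine ⟨C * (∫ w, (ball (0 : EuclideanSpace ℝ (Fin 2)) 1).indicator (fun w => ‖w‖⁻¹) w)
    + ∫ z, |(1 + ‖z‖) * ρ z|, fun N x hx => ?_⟩
  set c : ℝ := 2 ^ N with hc
  have hc0 : 0 < c := by positivity
  have hcinv : (2 : ℝ) ^ (-(N : ℝ)) = c⁻¹ := by rw [rpow_neg zero_le_two, rpow_natCast]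
  have hu : ‖c • x‖ ≤ 1 := by
    rw [norm_smul, norm_of_nonneg hc0.le, ← le_div_iff₀' hc0, one_div, ← hcinv]
    exact hx
  have hscale := integral_pow_finrank_mul_comp_smul (μ := volume) ρ (fun y => log ‖x - y‖) hc0
  rw [finrank_euclideanSpace_fin, hc, ← pow_mul, mul_comm] at hscale
  rw [hscale, integral_mul_log_norm_sub_inv_smul hρint
    (integrable_mul_log_norm_sub hd hρ.aestronglyMeasurable hρC hmom hu) hc0, hint, hcinv,
    log_inv, mul_one, sub_neg_eq_add, sub_add_cancel]
  exact abs_integral_mul_log_norm_sub_le hd hρ.aestronglyMeasurable hρC hmom hu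
end
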